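/- For any graph G and edge uv ∈ E(G), the bondage number satisfies b(G) ≤ deg(u) + deg(v) − 1 − |N(u) ∩ N(v)|. -/
import Mathlib


open SimpleGraph

section Defs
variable {V : Type*}

/-- `S` is a dominating set of `G`. -/
def Dominates (G : SimpleGraph V) (S : Set V) : Prop :=
  ∀ v : V, v ∈ S ∨ ∃ u ∈ S, G.Adj u v

/-- The domination number `γ(G)`. -/
noncomputable def domNum (G : SimpleGraph V) [Fintype V] : ℕ :=
  sInf {n | ∃ S : Finset V, S.card = n ∧ Dominates G ↑S}

/-- The bondage number `b(G)`. -/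
noncomputable def bondageNum (G : SimpleGraph V) [Fintype V] : ℕ :=
  sInf {n | ∃ A : Finset (Sym2 V), ↑A ⊆ G.edgeSet ∧ A.card = n ∧
    domNum (G.deleteEdges ↑A) = domNum G + 1}

/-- The clique number `ω(G)`. -/
noncomputable def cliqueNum' (G : SimpleGraph V) [Fintype V] : ℕ :=
  sSup {n | ∃ s : Finset V, G.IsNClique n s}

/-- The degree of a vertex. -/
noncomputable def vdeg (G : SimpleGraph V) (v : V) : ℕ := (G.neighborSet v).ncard

/-- The maximum degree `Δ(G)`. -/
noncomputable def maxDeg (G : SimpleGraph V) [Fintype V] : ℕ :=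
  sSup {d | ∃ v, vdeg G v = d}

/-- A chordal graph: no induced cycle of length at least 4. -/
def Chordal (G : SimpleGraph V) : Prop :=
  ∀ n, 4 ≤ n → IsEmpty (cycleGraph n ↪g G)

/-- The corona `G ∘ K₁`: attach a pendant vertex to each vertex of `G`. -/
def coronaK1 (G : SimpleGraph V) : SimpleGraph (V ⊕ V) :=
  SimpleGraph.fromRel (fun a b =>
    (∃ u v, a = Sum.inl u ∧ b = Sum.inl v ∧ G.Adj u v) ∨
    (∃ u, a = Sum.inl u ∧ b = Sum.inr u))

end Defs

section Aux
variable {V : Type*} [Fintype V]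

lemma dom_set_nonempty (G : SimpleGraph V) :
    {n | ∃ S : Finset V, S.card = n ∧ Dominates G ↑S}.Nonempty :=
  ⟨Finset.univ.card, Finset.univ, rfl, fun v => Or.inl (by simp)⟩

lemma domNum_le (G : SimpleGraph V) {S : Finset V} (h : Dominates G ↑S) :
    domNum G ≤ S.card := Nat.sInf_le ⟨S, rfl, h⟩

lemma exists_domNum_set (G : SimpleGraph V) :
    ∃ S : Finset V, S.card = domNum G ∧ Dominates G ↑S :=
  Nat.sInf_mem (dom_set_nonempty G)

lemma le_domNum (G : SimpleGraph V) {m : ℕ}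
    (h : ∀ S : Finset V, Dominates G ↑S → m ≤ S.card) : m ≤ domNum G := by
  obtain ⟨S, hc, hd⟩ := exists_domNum_set G
  exact hc ▸ h S hd

lemma domNum_mono {G G' : SimpleGraph V} (h : G' ≤ G) : domNum G ≤ domNum G' := by
  obtain ⟨S, hc, hd⟩ := exists_domNum_set G'
  exact hc ▸ domNum_le G (fun v => (hd v).imp id (fun ⟨w, hw, ha⟩ => ⟨w, hw, h ha⟩))

lemma domNum_deleteEdges_single_le (G : SimpleGraph V) (e : Sym2 V) :
    domNum (G.deleteEdges {e}) ≤ domNum G + 1 := by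
  classical
  induction e using Sym2.inductionOn with
  | hf a b =>
  obtain ⟨S, hc, hd⟩ := exists_domNum_set G
  by_cases ha : a ∈ S
  · refine le_trans (domNum_le _ (S := S ∪ {b}) ?_) (by
      calc (S ∪ {b}).card ≤ S.card + ({b} : Finset V).card := Finset.card_union_le _ _
      _ = domNum G + 1 := by simp [hc])
    intro w
    by_cases hw : w ∈ (↑(S ∪ {b}) : Set V)
    · exact Or.inl hw
    · rcases hd w with hwS | ⟨d, hdS, hadj⟩
      · exact absurd (by simp [hwS] : w ∈ (↑(S ∪ {b}) : Set V)) hw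
      · refine Or.inr ⟨d, by simp [hdS], ?_⟩
        rw [deleteEdges_adj]
        refine ⟨hadj, fun hmem => ?_⟩
        simp only [Set.mem_singleton_iff, Sym2.eq_iff] at hmem
        rcases hmem with ⟨_, rfl⟩ | ⟨_, rfl⟩
        · exact hw (by simp)
        · exact hw (by simp [ha])
  · by_cases hb : b ∈ S
    · refine le_trans (domNum_le _ (S := S ∪ {a}) ?_) (by
        calc (S ∪ {a}).card ≤ S.card + ({a} : Finset V).card := Finset.card_union_le _ _
        _ = domNum G + 1 := by simp [hc])
      intro w
      by_cases hw : w ∈ (↑(S ∪ {a}) : Set V)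
      · exact Or.inl hw
      · rcases hd w with hwS | ⟨d, hdS, hadj⟩
        · exact absurd (by simp [hwS] : w ∈ (↑(S ∪ {a}) : Set V)) hw
        · refine Or.inr ⟨d, by simp [hdS], ?_⟩
          rw [deleteEdges_adj]
          refine ⟨hadj, fun hmem => ?_⟩
          simp only [Set.mem_singleton_iff, Sym2.eq_iff] at hmem
          rcases hmem with ⟨_, rfl⟩ | ⟨_, rfl⟩
          · exact hw (by simp [hb])
          · exact hw (by simp)
    · refine le_trans (domNum_le _ (S := S) ?_) (by simp [hc])
      intro w
      rcases hd w with hwS | ⟨d, hdS, hadj⟩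
      · exact Or.inl hwS
      · refine Or.inr ⟨d, hdS, ?_⟩
        rw [deleteEdges_adj]
        refine ⟨hadj, fun hmem => ?_⟩
        simp only [Set.mem_singleton_iff, Sym2.eq_iff] at hmem
        rcases hmem with ⟨rfl, _⟩ | ⟨rfl, _⟩
        · exact ha hdS
        · exact hb hdS

lemma exists_subset_domNum_succ (G : SimpleGraph V) :
    ∀ F : Finset (Sym2 V), domNum G + 1 ≤ domNum (G.deleteEdges ↑F) →
    ∃ A ⊆ F, domNum (G.deleteEdges ↑A) = domNum G + 1 := by
  classical
  intro F
  induction F using Finset.strongInduction with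
  | _ F ih =>
  intro h
  by_cases heq : domNum (G.deleteEdges ↑F) = domNum G + 1
  · exact ⟨F, Finset.Subset.refl F, heq⟩
  · have hne : F.Nonempty := by
      rcases F.eq_empty_or_nonempty with rfl | h'
      · simp only [Finset.coe_empty, deleteEdges_empty] at h; omega
      · exact h'
    obtain ⟨e, he⟩ := hne
    have hstep : domNum (G.deleteEdges ↑F) ≤ domNum (G.deleteEdges ↑(F.erase e)) + 1 := by
      have h1 := domNum_deleteEdges_single_le (G.deleteEdges ↑(F.erase e)) e
      rw [deleteEdges_deleteEdges] at h1
      have hset : (↑(F.erase e) ∪ {e} : Set (Sym2 V)) = ↑F := by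
        ext x
        simp only [Set.mem_union, Finset.mem_coe, Finset.mem_erase, Set.mem_singleton_iff]
        constructor
        · rintro (⟨_, hx⟩ | rfl) <;> [exact hx; exact he]
        · intro hx; by_cases hxe : x = e
          · exact Or.inr hxe
          · exact Or.inl ⟨hxe, hx⟩
      rwa [hset] at h1
    obtain ⟨A, hA, hAd⟩ := ih (F.erase e) (Finset.erase_ssubset he) (by omega)
    exact ⟨A, hA.trans (Finset.erase_subset _ _), hAd⟩
end Aux

/-- for an edge `uv`, `b(G) ≤ deg u + deg v - 1 - |N(u) ∩ N(v)|`. -/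
theorem bondage_le_of_adj (V : Type*) [Fintype V] (G : SimpleGraph V) (u v : V)
    (huv : G.Adj u v) :
    bondageNum G ≤ vdeg G u + vdeg G v - 1 - (G.neighborSet u ∩ G.neighborSet v).ncard := by
  classical
  set Nu : Finset V := (G.neighborSet u).toFinset with hNu
  set Nv : Finset V := (G.neighborSet v).toFinset with hNv
  have memNu : ∀ x, x ∈ Nu ↔ G.Adj u x := fun x => by simp [hNu]
  have memNv : ∀ x, x ∈ Nv ↔ G.Adj v x := fun x => by simp [hNv]
  set F1 : Finset (Sym2 V) := (Nu.erase v).image (fun x => s(u, x)) with hF1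
  set F2 : Finset (Sym2 V) := (Nv \ (Nu ∪ {u})).image (fun y => s(v, y)) with hF2
  set F : Finset (Sym2 V) := insert s(u, v) (F1 ∪ F2) with hF
  -- membership characterizations
  have memF1 : ∀ e, e ∈ F1 ↔ ∃ x, x ∈ Nu ∧ x ≠ v ∧ e = s(u, x) := by
    intro e; simp only [hF1, Finset.mem_image, Finset.mem_erase]; aesop
  have memF2 : ∀ e, e ∈ F2 ↔ ∃ y, y ∈ Nv ∧ y ∉ Nu ∧ y ≠ u ∧ e = s(v, y) := by
    intro e
    simp only [hF2, Finset.mem_image, Finset.mem_sdiff, Finset.mem_union,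
      Finset.mem_singleton]
    aesop
  -- F consists of edges
  have hFedge : (↑F : Set (Sym2 V)) ⊆ G.edgeSet := by
    intro e he
    simp only [hF, Finset.coe_insert, Set.mem_insert_iff, Finset.coe_union,
      Set.mem_union, Finset.mem_coe] at he
    rcases he with rfl | he | he
    · exact huv
    · obtain ⟨x, hx, -, rfl⟩ := (memF1 e).mp he
      exact (memNu x).mp hx
    · obtain ⟨y, hy, -, -, rfl⟩ := (memF2 e).mp he
      exact (memNv y).mp hy
  -- H and its structure
  set H := G.deleteEdges ↑F with hH
  have hu_isol : ∀ x, ¬ H.Adj u x := by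
    intro x hx
    rw [hH, deleteEdges_adj] at hx
    obtain ⟨hadj, hnot⟩ := hx
    apply hnot
    by_cases hxv : x = v
    · subst hxv; simp [hF]
    · simp only [hF, Finset.coe_insert, Set.mem_insert_iff, Finset.coe_union,
        Set.mem_union, Finset.mem_coe]
      exact Or.inr (Or.inl ((memF1 _).mpr ⟨x, (memNu x).mpr hadj, hxv, rfl⟩))
  have hv_nb : ∀ y, H.Adj v y → y ∈ Nu := by
    intro y hy
    rw [hH, deleteEdges_adj] at hy
    obtain ⟨hadj, hnot⟩ := hy
    by_contra hyNu
    apply hnot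
    by_cases hyu : y = u
    · subst hyu
      simp only [hF, Finset.coe_insert, Set.mem_insert_iff]
      exact Or.inl (Sym2.eq_swap)
    · simp only [hF, Finset.coe_insert, Set.mem_insert_iff, Finset.coe_union,
        Set.mem_union, Finset.mem_coe]
      exact Or.inr (Or.inr ((memF2 _).mpr ⟨y, (memNv y).mpr hadj, hyNu, hyu, rfl⟩))
  -- domination number increases
  have hdomH : domNum G + 1 ≤ domNum H := by
    apply le_domNum
    intro S hd
    have huS : u ∈ S := by
      rcases hd u with h' | ⟨d, -, hadj⟩
      · exact h'
      · exact absurd hadj.symm (hu_isol d)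
    obtain ⟨w, hwS, hwu, hwadj⟩ : ∃ w, w ∈ S ∧ w ≠ u ∧ G.Adj w u := by
      rcases hd v with h' | ⟨d, hdS, hadj⟩
      · exact ⟨v, h', huv.symm.ne, huv.symm⟩
      · have hdNu : d ∈ Nu := hv_nb d hadj.symm
        have : G.Adj u d := (memNu d).mp hdNu
        exact ⟨d, hdS, this.ne', this.symm⟩
    have hdom : Dominates G ↑(S.erase u) := by
      intro x
      by_cases hxu : x = u
      · subst hxu
        exact Or.inr ⟨w, Finset.mem_coe.mpr (Finset.mem_erase.mpr ⟨hwu, hwS⟩), hwadj⟩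
      · rcases hd x with h' | ⟨d, hdS, hadj⟩
        · exact Or.inl (Finset.mem_coe.mpr (Finset.mem_erase.mpr ⟨hxu, h'⟩))
        · have hdu : d ≠ u := fun h => (hu_isol x) (h ▸ hadj)
          rw [hH, deleteEdges_adj] at hadj
          exact Or.inr ⟨d, Finset.mem_coe.mpr (Finset.mem_erase.mpr ⟨hdu, hdS⟩), hadj.1⟩
    have h1 := domNum_le G hdom
    have h2 : (S.erase u).card = S.card - 1 := Finset.card_erase_of_mem huS
    have h3 : 1 ≤ S.card := Finset.card_pos.mpr ⟨u, huS⟩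
    omega
  -- cardinality of F
  have hvNu : v ∈ Nu := (memNu v).mpr huv
  have huNv : u ∈ Nv := (memNv u).mpr huv.symm
  have huNu : u ∉ Nu := fun h => G.irrefl ((memNu u).mp h)
  have hinj_u : Function.Injective (fun x : V => s(u, x)) := fun a b h => by
    rw [Sym2.eq_iff] at h
    rcases h with ⟨-, h⟩ | ⟨h1, h2⟩
    · exact h
    · exact h2.trans h1
  have hinj_v : Function.Injective (fun x : V => s(v, x)) := fun a b h => by
    rw [Sym2.eq_iff] at h
    rcases h with ⟨-, h⟩ | ⟨h1, h2⟩
    · exact h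
    · exact h2.trans h1
  have hcard1 : F1.card = Nu.card - 1 := by
    rw [hF1, Finset.card_image_of_injective _ hinj_u, Finset.card_erase_of_mem hvNu]
  have hcard2 : F2.card = Nv.card - ((Nu ∩ Nv).card + 1) := by
    rw [hF2, Finset.card_image_of_injective _ hinj_v]
    have hsub : Nv ∩ (Nu ∪ {u}) ⊆ Nv := Finset.inter_subset_left
    have : Nv \ (Nu ∪ {u}) = Nv \ (Nv ∩ (Nu ∪ {u})) := by
      rw [Finset.sdiff_inter_self_left]
    rw [this, Finset.card_sdiff_of_subset hsub]
    congr 1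
    have : Nv ∩ (Nu ∪ {u}) = (Nu ∩ Nv) ∪ {u} := by
      ext x
      simp only [Finset.mem_inter, Finset.mem_union, Finset.mem_singleton]
      constructor
      · rintro ⟨h1, h2 | rfl⟩
        · exact Or.inl ⟨h2, h1⟩
        · exact Or.inr rfl
      · rintro (⟨h1, h2⟩ | rfl)
        · exact ⟨h2, Or.inl h1⟩
        · exact ⟨huNv, Or.inr rfl⟩
    rw [this, Finset.card_union_of_disjoint (by
      simp only [Finset.disjoint_singleton_right, Finset.mem_inter]
      exact fun h => huNu h.1), Finset.card_singleton]
  have hdisj12 : Disjoint F1 F2 := by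
    rw [Finset.disjoint_left]
    intro e he1 he2
    obtain ⟨x, hx, hxv, rfl⟩ := (memF1 _).mp he1
    obtain ⟨y, hy, hyNu, hyu, heq⟩ := (memF2 _).mp he2
    rw [Sym2.eq_iff] at heq
    rcases heq with ⟨h1, -⟩ | ⟨-, h2⟩
    · exact G.ne_of_adj huv h1
    · exact hxv h2
  have huvF12 : s(u, v) ∉ F1 ∪ F2 := by
    rw [Finset.mem_union]
    rintro (h | h)
    · obtain ⟨x, -, hxv, heq⟩ := (memF1 _).mp h
      rw [Sym2.eq_iff] at heq
      rcases heq with ⟨-, h2⟩ | ⟨-, h1⟩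
      · exact hxv h2.symm
      · exact G.ne_of_adj huv h1.symm
    · obtain ⟨y, -, -, hyu, heq⟩ := (memF2 _).mp h
      rw [Sym2.eq_iff] at heq
      rcases heq with ⟨h1, -⟩ | ⟨h2, -⟩
      · exact G.ne_of_adj huv h1
      · exact hyu h2.symm
  have hcardF : F.card = Nu.card + Nv.card - 1 - (Nu ∩ Nv).card := by
    have hk1 : (Nu ∩ Nv).card + 1 ≤ Nv.card := by
      have : (Nu ∩ Nv) ∪ {u} ⊆ Nv := by
        intro x hx
        rcases Finset.mem_union.mp hx with h | h
        · exact (Finset.mem_inter.mp h).2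
        · rw [Finset.mem_singleton.mp h]; exact huNv
      have hc := Finset.card_le_card this
      rwa [Finset.card_union_of_disjoint (by
        simp only [Finset.disjoint_singleton_right, Finset.mem_inter]
        exact fun h => huNu h.1), Finset.card_singleton] at hc
    have hd1 : 1 ≤ Nu.card := Finset.card_pos.mpr ⟨v, hvNu⟩
    rw [hF, Finset.card_insert_of_notMem huvF12, Finset.card_union_of_disjoint hdisj12,
      hcard1, hcard2]
    omega
  -- convert ncard to Finset card
  have hvdu : vdeg G u = Nu.card := Set.ncard_eq_toFinset_card' _
  have hvdv : vdeg G v = Nv.card := Set.ncard_eq_toFinset_card' _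
  have hncap : (G.neighborSet u ∩ G.neighborSet v).ncard = (Nu ∩ Nv).card := by
    rw [Set.ncard_eq_toFinset_card']
    congr 1
    ext x
    simp [hNu, hNv]
  -- conclude
  obtain ⟨A, hAF, hAeq⟩ := exists_subset_domNum_succ G F (hH ▸ hdomH)
  have hb : bondageNum G ≤ A.card :=
    Nat.sInf_le ⟨A, (Finset.coe_subset.mpr hAF).trans hFedge, rfl, hAeq⟩
  calc bondageNum G ≤ A.card := hb
    _ ≤ F.card := Finset.card_le_card hAF
    _ = vdeg G u + vdeg G v - 1 - (G.neighborSet u ∩ G.neighborSet v).ncard := by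
        rw [hcardF, hvdu, hvdv, hncap]
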